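/- Let L, B, T > 0 and D = (0,L)×(−B,B). Suppose u₁ and u₂ are both smooth on [0,L]×[−B,B]×[0,T], both satisfy u_t + (1+u)u_x + u_{xxx} + u_{xyy} = 0 on D×(0,T), both satisfy the boundary conditions u(x,±B,t) = 0 and u(0,y,t) = u(L,y,t) = u_x(L,y,t) = 0, and u₁(x,y,0) = u₂(x,y,0) for all (x,y) ∈ D. Then u₁ = u₂ on D×[0,T]. -/

import Mathlib

open MeasureTheory Set Metric intervalIntegral


noncomputable def px (f : ℝ × ℝ × ℝ → ℝ) : ℝ × ℝ × ℝ → ℝ := fun p => fderiv ℝ f p (1,0,0)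
noncomputable def py (f : ℝ × ℝ × ℝ → ℝ) : ℝ × ℝ × ℝ → ℝ := fun p => fderiv ℝ f p (0,1,0)
noncomputable def pt (f : ℝ × ℝ × ℝ → ℝ) : ℝ × ℝ × ℝ → ℝ := fun p => fderiv ℝ f p (0,0,1)

lemma ContDiff.px {f : ℝ × ℝ × ℝ → ℝ} (hf : ContDiff ℝ (⊤ : ℕ∞) f) : ContDiff ℝ (⊤ : ℕ∞) (px f) :=
  (hf.fderiv_right (by simp)).clm_apply contDiff_const
lemma ContDiff.py {f : ℝ × ℝ × ℝ → ℝ} (hf : ContDiff ℝ (⊤ : ℕ∞) f) : ContDiff ℝ (⊤ : ℕ∞) (py f) :=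
  (hf.fderiv_right (by simp)).clm_apply contDiff_const
lemma ContDiff.pt2 {f : ℝ × ℝ × ℝ → ℝ} (hf : ContDiff ℝ (⊤ : ℕ∞) f) : ContDiff ℝ (⊤ : ℕ∞) (pt f) :=
  (hf.fderiv_right (by simp)).clm_apply contDiff_const

lemma hasDerivAt_slice_x {f : ℝ × ℝ × ℝ → ℝ} (hf : ContDiff ℝ (⊤ : ℕ∞) f) (x y t : ℝ) :
    HasDerivAt (fun x' => f (x', y, t)) (px f (x, y, t)) x := by
  have h1 : HasDerivAt (fun x' : ℝ => ((x', y, t) : ℝ × ℝ × ℝ)) ((1 : ℝ), (0 : ℝ), (0 : ℝ)) x := by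
    exact (hasDerivAt_id x).prodMk (hasDerivAt_const x ((y, t) : ℝ × ℝ))
  exact ((hf.differentiable (by simp) (x, y, t)).hasFDerivAt).comp_hasDerivAt x h1

lemma hasDerivAt_slice_y {f : ℝ × ℝ × ℝ → ℝ} (hf : ContDiff ℝ (⊤ : ℕ∞) f) (x y t : ℝ) :
    HasDerivAt (fun y' => f (x, y', t)) (py f (x, y, t)) y := by
  have h1 : HasDerivAt (fun y' : ℝ => ((x, y', t) : ℝ × ℝ × ℝ)) ((0 : ℝ), (1 : ℝ), (0 : ℝ)) y := by
    simpa using (hasDerivAt_const y x).prodMk ((hasDerivAt_id y).prodMk (hasDerivAt_const y t))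
  exact ((hf.differentiable (by simp) (x, y, t)).hasFDerivAt).comp_hasDerivAt y h1

lemma hasDerivAt_slice_t {f : ℝ × ℝ × ℝ → ℝ} (hf : ContDiff ℝ (⊤ : ℕ∞) f) (x y t : ℝ) :
    HasDerivAt (fun t' => f (x, y, t')) (pt f (x, y, t)) t := by
  have h1 : HasDerivAt (fun t' : ℝ => ((x, y, t') : ℝ × ℝ × ℝ)) ((0 : ℝ), (0 : ℝ), (1 : ℝ)) t := by
    simpa using (hasDerivAt_const t x).prodMk ((hasDerivAt_const t y).prodMk (hasDerivAt_id t))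
  exact ((hf.differentiable (by simp) (x, y, t)).hasFDerivAt).comp_hasDerivAt t h1

lemma deriv_slice_x {f : ℝ × ℝ × ℝ → ℝ} (hf : ContDiff ℝ (⊤ : ℕ∞) f) (x y t : ℝ) :
    deriv (fun x' => f (x', y, t)) x = px f (x, y, t) := (hasDerivAt_slice_x hf x y t).deriv
lemma deriv_slice_y {f : ℝ × ℝ × ℝ → ℝ} (hf : ContDiff ℝ (⊤ : ℕ∞) f) (x y t : ℝ) :
    deriv (fun y' => f (x, y', t)) y = py f (x, y, t) := (hasDerivAt_slice_y hf x y t).deriv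
lemma deriv_slice_t {f : ℝ × ℝ × ℝ → ℝ} (hf : ContDiff ℝ (⊤ : ℕ∞) f) (x y t : ℝ) :
    deriv (fun t' => f (x, y, t')) t = pt f (x, y, t) := (hasDerivAt_slice_t hf x y t).deriv

lemma deriv2_slice_y {f : ℝ × ℝ × ℝ → ℝ} (hf : ContDiff ℝ (⊤ : ℕ∞) f) (x y t : ℝ) :
    deriv^[2] (fun y' => f (x, y', t)) y = py (py f) (x, y, t) := by
  have h : deriv (fun y' => f (x, y', t)) = fun y' => py f (x, y', t) :=
    funext fun y' => deriv_slice_y hf x y' t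
  simp only [Function.iterate_succ, Function.iterate_zero, Function.comp_apply, Function.id_def]
  rw [h, deriv_slice_y hf.py x y t]

lemma deriv3_slice_x {f : ℝ × ℝ × ℝ → ℝ} (hf : ContDiff ℝ (⊤ : ℕ∞) f) (x y t : ℝ) :
    deriv^[3] (fun x' => f (x', y, t)) x = px (px (px f)) (x, y, t) := by
  have h1 : deriv (fun x' => f (x', y, t)) = fun x' => px f (x', y, t) :=
    funext fun x' => deriv_slice_x hf x' y t
  have h2 : deriv (fun x' => px f (x', y, t)) = fun x' => px (px f) (x', y, t) :=
    funext fun x' => deriv_slice_x hf.px x' y t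
  show deriv (deriv (deriv _)) _ = _
  rw [h1, h2, deriv_slice_x hf.px.px x y t]

-- symmetry of second partials
lemma pv_apply {f : ℝ × ℝ × ℝ → ℝ} (hf : ContDiff ℝ (⊤ : ℕ∞) f) (v : ℝ × ℝ × ℝ) (p : ℝ × ℝ × ℝ) :
    HasFDerivAt (fun q => fderiv ℝ f q v)
      ((ContinuousLinearMap.apply ℝ ℝ v).comp (fderiv ℝ (fderiv ℝ f) p)) p := by
  have h2 : HasFDerivAt (fderiv ℝ f) (fderiv ℝ (fderiv ℝ f) p) p :=
    (((hf.fderiv_right (m := (⊤ : ℕ∞)) (by simp)).differentiable (by simp)) p).hasFDerivAt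
  exact (ContinuousLinearMap.apply ℝ ℝ v).hasFDerivAt.comp p h2

lemma pd_pd {f : ℝ × ℝ × ℝ → ℝ} (hf : ContDiff ℝ (⊤ : ℕ∞) f) (v w : ℝ × ℝ × ℝ) (p : ℝ × ℝ × ℝ) :
    fderiv ℝ (fun q => fderiv ℝ f q v) p w = fderiv ℝ (fderiv ℝ f) p w v := by
  rw [(pv_apply hf v p).fderiv]; rfl

lemma px_py_symm {f : ℝ × ℝ × ℝ → ℝ} (hf : ContDiff ℝ (⊤ : ℕ∞) f) (p : ℝ × ℝ × ℝ) :
    px (py f) p = py (px f) p := by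
  have h1 : ∀ᶠ q in nhds p, HasFDerivAt f (fderiv ℝ f q) q :=
    Filter.Eventually.of_forall fun q => (hf.differentiable (by simp) q).hasFDerivAt
  have h2 : HasFDerivAt (fderiv ℝ f) (fderiv ℝ (fderiv ℝ f) p) p :=
    (((hf.fderiv_right (m := (⊤ : ℕ∞)) (by simp)).differentiable (by simp)) p).hasFDerivAt
  have hsymm := second_derivative_symmetric_of_eventually h1 h2 (((1:ℝ),(0:ℝ),(0:ℝ))) (((0:ℝ),(1:ℝ),(0:ℝ)))
  show fderiv ℝ (py f) p (1,0,0) = fderiv ℝ (px f) p (0,1,0)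
  rw [show py f = fun q => fderiv ℝ f q (0,1,0) from rfl,
    show px f = fun q => fderiv ℝ f q (1,0,0) from rfl,
    pd_pd hf _ _ p, pd_pd hf _ _ p]
  exact hsymm


-- deriv of a function that vanishes on an open interval
lemma deriv_eq_zero_of_eqOn_zero {g : ℝ → ℝ} {a b x : ℝ} (hx : x ∈ Ioo a b)
    (h0 : ∀ x' ∈ Ioo a b, g x' = 0) : deriv g x = 0 := by
  have h : g =ᶠ[nhds x] (fun _ => (0:ℝ)) :=
    Filter.eventuallyEq_of_mem (Ioo_mem_nhds hx.1 hx.2) h0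
  rw [h.deriv_eq, deriv_const]

lemma integrableOn_rect {g : ℝ × ℝ → ℝ} (hg : Continuous g) (a b c d : ℝ) :
    IntegrableOn g (Ioo a b ×ˢ Ioo c d) := by
  have hc : IsCompact (Icc ((a,c) : ℝ × ℝ) (b,d)) := isCompact_Icc
  have : IntegrableOn g (Icc a b ×ˢ Icc c d) := by
    rw [Icc_prod_Icc]
    exact hg.continuousOn.integrableOn_compact hc
  exact this.mono_set (prod_mono Ioo_subset_Icc_self Ioo_subset_Icc_self)

lemma measure_rect_lt_top (a b c d : ℝ) :
    (volume : Measure (ℝ × ℝ)) (Ioo a b ×ˢ Ioo c d) < ⊤ := by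
  calc volume (Ioo a b ×ˢ Ioo c d) ≤ volume (Icc ((a,c) : ℝ × ℝ) (b,d)) := by
        apply measure_mono
        rw [← Icc_prod_Icc]
        exact prod_mono Ioo_subset_Icc_self Ioo_subset_Icc_self
    _ < ⊤ := isCompact_Icc.measure_lt_top

set_option maxHeartbeats 1000000 in
lemma hasDerivAt_param_integral {G : ℝ × ℝ × ℝ → ℝ} (hG : ContDiff ℝ (⊤ : ℕ∞) G)
    (a b c d t₀ : ℝ) :
    HasDerivAt (fun t => ∫ p in Ioo a b ×ˢ Ioo c d, G (p.1, p.2, t))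
      (∫ p in Ioo a b ×ˢ Ioo c d, pt G (p.1, p.2, t₀)) t₀ := by
  have hSm : MeasurableSet (Ioo a b ×ˢ Ioo c d : Set (ℝ × ℝ)) :=
    measurableSet_Ioo.prod measurableSet_Ioo
  have hGc : Continuous G := hG.continuous
  have hptc : Continuous (pt G) := by
    have : ContDiff ℝ (⊤ : ℕ∞) (pt G) := (hG.fderiv_right (by simp)).clm_apply contDiff_const
    exact this.continuous
  have hemb : Continuous (fun q : (ℝ × ℝ) × ℝ => ((q.1.1, q.1.2, q.2) : ℝ × ℝ × ℝ)) := by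
    fun_prop
  have hK : IsCompact ((Icc a b ×ˢ Icc c d) ×ˢ Icc (t₀-1) (t₀+1) : Set ((ℝ × ℝ) × ℝ)) :=
    (isCompact_Icc.prod isCompact_Icc).prod isCompact_Icc
  obtain ⟨M, hM⟩ := hK.exists_bound_of_continuousOn ((hptc.comp hemb).continuousOn)
  have hmeas : ∀ t : ℝ, AEStronglyMeasurable (fun p : ℝ × ℝ => G (p.1, p.2, t))
      ((volume : Measure (ℝ × ℝ)).restrict (Ioo a b ×ˢ Ioo c d)) := fun t =>
    ((hGc.comp (by fun_prop : Continuous (fun p : ℝ × ℝ => ((p.1, p.2, t) : ℝ × ℝ × ℝ))))).aestronglyMeasurable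
  have hint : Integrable (fun p : ℝ × ℝ => G (p.1, p.2, t₀))
      ((volume : Measure (ℝ × ℝ)).restrict (Ioo a b ×ˢ Ioo c d)) :=
    integrableOn_rect (hGc.comp (by fun_prop)) a b c d
  have hmeas' : AEStronglyMeasurable (fun p : ℝ × ℝ => pt G (p.1, p.2, t₀))
      ((volume : Measure (ℝ × ℝ)).restrict (Ioo a b ×ˢ Ioo c d)) :=
    ((hptc.comp (by fun_prop : Continuous (fun p : ℝ × ℝ => ((p.1, p.2, t₀) : ℝ × ℝ × ℝ))))).aestronglyMeasurable
  have hbound : ∀ᵐ p ∂((volume : Measure (ℝ × ℝ)).restrict (Ioo a b ×ˢ Ioo c d)),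
      ∀ t ∈ ball t₀ 1, ‖pt G (p.1, p.2, t)‖ ≤ M := by
    rw [ae_restrict_iff' hSm]
    refine Filter.Eventually.of_forall fun p hp t ht => ?_
    have h1 : |t - t₀| < 1 := by
      simpa [Real.norm_eq_abs] using mem_ball_iff_norm.1 ht
    have h2 := abs_lt.1 h1
    exact hM ((p, t)) ⟨⟨Ioo_subset_Icc_self hp.1, Ioo_subset_Icc_self hp.2⟩,
      ⟨by linarith [h2.1], by linarith [h2.2]⟩⟩
  have hbint : Integrable (fun _ : ℝ × ℝ => M)
      ((volume : Measure (ℝ × ℝ)).restrict (Ioo a b ×ˢ Ioo c d)) := by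
    refine MeasureTheory.integrableOn_const ?_
    exact (measure_rect_lt_top a b c d).ne
  have hdiff : ∀ᵐ p ∂((volume : Measure (ℝ × ℝ)).restrict (Ioo a b ×ˢ Ioo c d)),
      ∀ t ∈ ball t₀ 1, HasDerivAt (fun t' => G (p.1, p.2, t')) (pt G (p.1, p.2, t)) t :=
    Filter.Eventually.of_forall fun p t _ => hasDerivAt_slice_t hG p.1 p.2 t
  exact (hasDerivAt_integral_of_dominated_loc_of_deriv_le (ball_mem_nhds t₀ one_pos)
    (Filter.Eventually.of_forall hmeas) hint hmeas' hbound hbint hdiff).2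

section IBP
variable {Z W : ℝ × ℝ × ℝ → ℝ} {L y t : ℝ}

lemma cont_slice_x {f : ℝ × ℝ × ℝ → ℝ} (hf : Continuous f) (y t : ℝ) :
    Continuous (fun x' => f (x', y, t)) := hf.comp (by fun_prop)

lemma cont_px {f : ℝ × ℝ × ℝ → ℝ} (hf : ContDiff ℝ (⊤ : ℕ∞) f) : Continuous (px f) :=
  hf.px.continuous
lemma cont_py {f : ℝ × ℝ × ℝ → ℝ} (hf : ContDiff ℝ (⊤ : ℕ∞) f) : Continuous (py f) :=
  hf.py.continuous
lemma cont_pt {f : ℝ × ℝ × ℝ → ℝ} (hf : ContDiff ℝ (⊤ : ℕ∞) f) : Continuous (pt f) :=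
  hf.pt2.continuous

-- (A)  ∫ Z Zx = (Z(L)² - Z(0)²)/2
lemma ibp_A (hZ : ContDiff ℝ (⊤ : ℕ∞) Z) :
    ∫ x in (0:ℝ)..L, Z (x, y, t) * px Z (x, y, t)
      = (Z (L,y,t))^2/2 - (Z (0,y,t))^2/2 := by
  apply intervalIntegral.integral_eq_sub_of_hasDerivAt (f := fun x => (Z (x,y,t))^2/2)
  · intro x _
    have h := ((hasDerivAt_slice_x hZ x y t).fun_pow 2).div_const 2
    exact h.congr_deriv (by ring)
  · exact (((cont_slice_x hZ.continuous y t).mul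
      (cont_slice_x (cont_px hZ) y t))).intervalIntegrable 0 L

-- (C part 1) ∫ Z Zxxx = [Z Zxx] - ∫ Zx Zxx
lemma ibp_C1 (hZ : ContDiff ℝ (⊤ : ℕ∞) Z) :
    ∫ x in (0:ℝ)..L, Z (x,y,t) * px (px (px Z)) (x,y,t)
      = Z (L,y,t) * px (px Z) (L,y,t) - Z (0,y,t) * px (px Z) (0,y,t)
        - ∫ x in (0:ℝ)..L, px Z (x,y,t) * px (px Z) (x,y,t) := by
  apply intervalIntegral.integral_mul_deriv_eq_deriv_mul
  · exact fun x _ => hasDerivAt_slice_x hZ x y t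
  · exact fun x _ => hasDerivAt_slice_x hZ.px.px x y t
  · exact (cont_slice_x (cont_px hZ) y t).intervalIntegrable 0 L
  · exact (cont_slice_x (cont_px hZ.px.px) y t).intervalIntegrable 0 L

-- (C part 2) ∫ Zx Zxx = ((Zx L)² - (Zx 0)²)/2
lemma ibp_C2 (hZ : ContDiff ℝ (⊤ : ℕ∞) Z) :
    ∫ x in (0:ℝ)..L, px Z (x,y,t) * px (px Z) (x,y,t)
      = (px Z (L,y,t))^2/2 - (px Z (0,y,t))^2/2 := by
  apply intervalIntegral.integral_eq_sub_of_hasDerivAt (f := fun x => (px Z (x,y,t))^2/2)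
  · intro x _
    have h := ((hasDerivAt_slice_x hZ.px x y t).fun_pow 2).div_const 2
    exact h.congr_deriv (by ring)
  · exact ((cont_slice_x (cont_px hZ) y t).mul
      (cont_slice_x (cont_px hZ.px) y t)).intervalIntegrable 0 L

-- (D1) ∫ Z (Zyy)_x = [Z Zyy] - ∫ Zx Zyy
lemma ibp_D1 (hZ : ContDiff ℝ (⊤ : ℕ∞) Z) :
    ∫ x in (0:ℝ)..L, Z (x,y,t) * px (py (py Z)) (x,y,t)
      = Z (L,y,t) * py (py Z) (L,y,t) - Z (0,y,t) * py (py Z) (0,y,t)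
        - ∫ x in (0:ℝ)..L, px Z (x,y,t) * py (py Z) (x,y,t) := by
  apply intervalIntegral.integral_mul_deriv_eq_deriv_mul
  · exact fun x _ => hasDerivAt_slice_x hZ x y t
  · exact fun x _ => hasDerivAt_slice_x hZ.py.py x y t
  · exact (cont_slice_x (cont_px hZ) y t).intervalIntegrable 0 L
  · exact (cont_slice_x (cont_px hZ.py.py) y t).intervalIntegrable 0 L

-- (D2)  y-IBP at fixed x : ∫ Zx Zyy dy = [Zx Zy] - ∫ (Zy)_x Zy dy   (uses symmetry)
lemma ibp_D2 (hZ : ContDiff ℝ (⊤ : ℕ∞) Z) {B x : ℝ} :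
    ∫ y in (-B:ℝ)..B, px Z (x,y,t) * py (py Z) (x,y,t)
      = px Z (x,B,t) * py Z (x,B,t) - px Z (x,-B,t) * py Z (x,-B,t)
        - ∫ y in (-B:ℝ)..B, px (py Z) (x,y,t) * py Z (x,y,t) := by
  have h := intervalIntegral.integral_mul_deriv_eq_deriv_mul
    (u := fun y' => px Z (x,y',t)) (v := fun y' => py Z (x,y',t))
    (u' := fun y' => py (px Z) (x,y',t)) (v' := fun y' => py (py Z) (x,y',t))
    (a := -B) (b := B)
    (fun y' _ => hasDerivAt_slice_y hZ.px x y' t)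
    (fun y' _ => hasDerivAt_slice_y hZ.py x y' t)
    (((cont_py hZ.px).comp (by fun_prop)).intervalIntegrable _ _)
    (((cont_py hZ.py).comp (by fun_prop)).intervalIntegrable _ _)
  rw [h]
  congr 1
  apply intervalIntegral.integral_congr
  intro y' _
  simp only [← px_py_symm hZ]

-- (D3) FTC in x for (Zy)²/2
lemma ibp_D3 (hZ : ContDiff ℝ (⊤ : ℕ∞) Z) :
    ∫ x in (0:ℝ)..L, px (py Z) (x,y,t) * py Z (x,y,t)
      = (py Z (L,y,t))^2/2 - (py Z (0,y,t))^2/2 := by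
  apply intervalIntegral.integral_eq_sub_of_hasDerivAt (f := fun x => (py Z (x,y,t))^2/2)
  · intro x _
    have h := ((hasDerivAt_slice_x hZ.py x y t).fun_pow 2).div_const 2
    exact h.congr_deriv (by ring)
  · exact ((cont_slice_x (cont_px hZ.py) y t).mul
      (cont_slice_x (cont_py hZ) y t)).intervalIntegrable 0 L

-- (B) nonlinear term, two IBPs
lemma ibp_B {U₁ U₂ : ℝ × ℝ × ℝ → ℝ} (hU₁ : ContDiff ℝ (⊤ : ℕ∞) U₁) (hU₂ : ContDiff ℝ (⊤ : ℕ∞) U₂)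
    (h10 : U₁ (0,y,t) = 0) (h1L : U₁ (L,y,t) = 0)
    (h20 : U₂ (0,y,t) = 0) (h2L : U₂ (L,y,t) = 0) :
    ∫ x in (0:ℝ)..L, (U₁ (x,y,t) - U₂ (x,y,t))
        * (U₁ (x,y,t) * px U₁ (x,y,t) - U₂ (x,y,t) * px U₂ (x,y,t))
      = (1/4) * ∫ x in (0:ℝ)..L,
          (U₁ (x,y,t) - U₂ (x,y,t))^2 * (px U₁ (x,y,t) + px U₂ (x,y,t)) := by
  have c1 : Continuous (fun x => U₁ (x,y,t)) := cont_slice_x hU₁.continuous y t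
  have c2 : Continuous (fun x => U₂ (x,y,t)) := cont_slice_x hU₂.continuous y t
  have c1x : Continuous (fun x => px U₁ (x,y,t)) := cont_slice_x (cont_px hU₁) y t
  have c2x : Continuous (fun x => px U₂ (x,y,t)) := cont_slice_x (cont_px hU₂) y t
  -- first IBP : u = Z, v = (U₁²-U₂²)/2
  have h1 := intervalIntegral.integral_mul_deriv_eq_deriv_mul
    (u := fun x => U₁ (x,y,t) - U₂ (x,y,t))
    (u' := fun x => px U₁ (x,y,t) - px U₂ (x,y,t))
    (v := fun x => ((U₁ (x,y,t))^2 - (U₂ (x,y,t))^2)/2)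
    (v' := fun x => U₁ (x,y,t) * px U₁ (x,y,t) - U₂ (x,y,t) * px U₂ (x,y,t))
    (a := 0) (b := L)
    (fun x _ => (hasDerivAt_slice_x hU₁ x y t).sub (hasDerivAt_slice_x hU₂ x y t))
    (fun x _ => by
      have h := (((hasDerivAt_slice_x hU₁ x y t).fun_pow 2).sub
        ((hasDerivAt_slice_x hU₂ x y t).fun_pow 2)).div_const 2
      exact h.congr_deriv (by ring))
    ((c1x.sub c2x).intervalIntegrable 0 L)
    (((c1.mul c1x).sub (c2.mul c2x)).intervalIntegrable 0 L)
  -- second IBP : ∫ (Z²)' W + Z² W' = [Z² W]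
  have h2 := intervalIntegral.integral_deriv_mul_eq_sub
    (u := fun x => (U₁ (x,y,t) - U₂ (x,y,t))^2)
    (u' := fun x => 2 * (U₁ (x,y,t) - U₂ (x,y,t)) * (px U₁ (x,y,t) - px U₂ (x,y,t)))
    (v := fun x => U₁ (x,y,t) + U₂ (x,y,t))
    (v' := fun x => px U₁ (x,y,t) + px U₂ (x,y,t))
    (a := 0) (b := L)
    (fun x _ => by
      have h := ((hasDerivAt_slice_x hU₁ x y t).sub (hasDerivAt_slice_x hU₂ x y t)).fun_pow 2
      exact h.congr_deriv (by simp only [Pi.sub_apply]; ring))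
    (fun x _ => (hasDerivAt_slice_x hU₁ x y t).add (hasDerivAt_slice_x hU₂ x y t))
    ((((continuous_const.mul (c1.sub c2)).mul (c1x.sub c2x))).intervalIntegrable 0 L)
    ((c1x.add c2x).intervalIntegrable 0 L)
  simp only [h10, h1L, h20, h2L] at h1 h2
  norm_num at h1 h2
  rw [intervalIntegral.integral_add
      ((((continuous_const.fun_mul (c1.fun_sub c2)).fun_mul (c1x.fun_sub c2x)).fun_mul (c1.fun_add c2)).intervalIntegrable _ _)
      ((((c1.fun_sub c2).fun_pow 2).fun_mul (c1x.fun_add c2x)).intervalIntegrable _ _)] at h2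
  have e : (∫ x in (0:ℝ)..L, (px U₁ (x,y,t) - px U₂ (x,y,t))
        * (((U₁ (x,y,t))^2 - (U₂ (x,y,t))^2)/2))
      = (1/4) * ∫ x in (0:ℝ)..L, 2 * (U₁ (x,y,t) - U₂ (x,y,t))
          * (px U₁ (x,y,t) - px U₂ (x,y,t)) * (U₁ (x,y,t) + U₂ (x,y,t)) := by
    rw [← intervalIntegral.integral_const_mul]
    apply intervalIntegral.integral_congr
    intro x _
    simp only
    ring
  rw [h1, e]
  linarith

end IBP


section Iter
variable {f : ℝ × ℝ → ℝ} {a b c d : ℝ}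

lemma ioo_eq_intervalIntegral {g : ℝ → ℝ} (hab : a ≤ b) :
    ∫ x in Ioo a b, g x = ∫ x in a..b, g x := by
  rw [intervalIntegral.integral_of_le hab, MeasureTheory.integral_Ioc_eq_integral_Ioo]

lemma integrableOn_Ioo_of_continuous {g : ℝ → ℝ} (hg : Continuous g) :
    IntegrableOn g (Ioo a b) :=
  (hg.continuousOn.integrableOn_compact isCompact_Icc).mono_set Ioo_subset_Icc_self

lemma rect_iter (hf : Continuous f) :
    ∫ p in Ioo a b ×ˢ Ioo c d, f p = ∫ x in Ioo a b, ∫ y in Ioo c d, f (x, y) := by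
  rw [Measure.volume_eq_prod]
  apply MeasureTheory.setIntegral_prod
  rw [← Measure.volume_eq_prod]
  exact integrableOn_rect hf a b c d

lemma rect_swap (hf : Continuous f) :
    ∫ x in Ioo a b, ∫ y in Ioo c d, f (x, y) = ∫ y in Ioo c d, ∫ x in Ioo a b, f (x, y) := by
  apply MeasureTheory.integral_integral_swap
  rw [Measure.prod_restrict, ← Measure.volume_eq_prod]
  exact (integrableOn_rect hf a b c d).congr_fun (fun p _ => rfl)
    (measurableSet_Ioo.prod measurableSet_Ioo)

end Iter

lemma pt_sq {Z : ℝ × ℝ × ℝ → ℝ} (hZ : ContDiff ℝ (⊤ : ℕ∞) Z) (p : ℝ × ℝ × ℝ) :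
    pt (fun q => (Z q)^2) p = 2 * Z p * pt Z p := by
  obtain ⟨x, y, t⟩ := p
  have h1 := (hasDerivAt_slice_t hZ x y t).pow 2
  have h2 := hasDerivAt_slice_t (hZ.pow 2) x y t
  have h3 : pt (fun q => (Z q)^2) (x,y,t) = 2 * Z (x,y,t) ^ (2-1) * pt Z (x,y,t) :=
    h2.unique h1
  simpa using h3

lemma px_subf {f g : ℝ × ℝ × ℝ → ℝ} (hf : ContDiff ℝ (⊤ : ℕ∞) f) (hg : ContDiff ℝ (⊤ : ℕ∞) g) :
    px (fun p => f p - g p) = fun p => px f p - px g p := by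
  funext p
  show fderiv ℝ (fun p => f p - g p) p (1,0,0) = _
  rw [fderiv_fun_sub (hf.differentiable (by simp) p) (hg.differentiable (by simp) p)]
  rfl

lemma py_subf {f g : ℝ × ℝ × ℝ → ℝ} (hf : ContDiff ℝ (⊤ : ℕ∞) f) (hg : ContDiff ℝ (⊤ : ℕ∞) g) :
    py (fun p => f p - g p) = fun p => py f p - py g p := by
  funext p
  show fderiv ℝ (fun p => f p - g p) p (0,1,0) = _
  rw [fderiv_fun_sub (hf.differentiable (by simp) p) (hg.differentiable (by simp) p)]
  rfl

lemma pt_subf {f g : ℝ × ℝ × ℝ → ℝ} (hf : ContDiff ℝ (⊤ : ℕ∞) f) (hg : ContDiff ℝ (⊤ : ℕ∞) g) :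
    pt (fun p => f p - g p) = fun p => pt f p - pt g p := by
  funext p
  show fderiv ℝ (fun p => f p - g p) p (0,0,1) = _
  rw [fderiv_fun_sub (hf.differentiable (by simp) p) (hg.differentiable (by simp) p)]
  rfl

set_option maxHeartbeats 2000000 in
lemma main_estimate {L B M : ℝ} (hL : 0 < L) (hB : 0 < B)
    {U₁ U₂ Z : ℝ × ℝ × ℝ → ℝ} (hU₁ : ContDiff ℝ (⊤ : ℕ∞) U₁) (hU₂ : ContDiff ℝ (⊤ : ℕ∞) U₂)
    (hZdef : Z = fun p => U₁ p - U₂ p) {t : ℝ}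
    (hpt : ∀ x ∈ Ioo 0 L, ∀ y ∈ Ioo (-B) B,
      pt Z (x,y,t) = -(px Z (x,y,t)
        + (U₁ (x,y,t) * px U₁ (x,y,t) - U₂ (x,y,t) * px U₂ (x,y,t))
        + px (px (px Z)) (x,y,t) + px (py (py Z)) (x,y,t)))
    (hbx0 : ∀ y ∈ Icc (-B) B, U₁ (0,y,t) = 0 ∧ U₂ (0,y,t) = 0)
    (hbxL : ∀ y ∈ Icc (-B) B, U₁ (L,y,t) = 0 ∧ U₂ (L,y,t) = 0)
    (hbxLx : ∀ y ∈ Icc (-B) B, px Z (L,y,t) = 0)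
    (hbyB : ∀ x ∈ Icc 0 L, Z (x,B,t) = 0 ∧ Z (x,-B,t) = 0)
    (hMb : ∀ x ∈ Icc 0 L, ∀ y ∈ Icc (-B) B, |px U₁ (x,y,t) + px U₂ (x,y,t)| ≤ M) :
    ∫ p in Ioo 0 L ×ˢ Ioo (-B) B, pt (fun q => (Z q)^2) (p.1,p.2,t)
      ≤ (M/2) * ∫ p in Ioo 0 L ×ˢ Ioo (-B) B, (Z (p.1,p.2,t))^2 := by
  have hBB : (-B : ℝ) ≤ B := by linarith
  have hZ : ContDiff ℝ (⊤ : ℕ∞) Z := by rw [hZdef]; exact hU₁.sub hU₂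
  have emb : Continuous (fun p : ℝ × ℝ => ((p.1, p.2, t) : ℝ × ℝ × ℝ)) := by fun_prop
  have cZ : Continuous Z := hZ.continuous
  have cpx : Continuous (px Z) := cont_px hZ
  have cS : MeasurableSet (Ioo (0:ℝ) L ×ˢ Ioo (-B) B) := measurableSet_Ioo.prod measurableSet_Ioo
  -- continuity of the 2-D integrands
  have c1 : Continuous (fun p : ℝ × ℝ => Z (p.1,p.2,t) * px Z (p.1,p.2,t)) :=
    (cZ.comp emb).mul (cpx.comp emb)
  have c2 : Continuous (fun p : ℝ × ℝ => Z (p.1,p.2,t) *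
      (U₁ (p.1,p.2,t) * px U₁ (p.1,p.2,t) - U₂ (p.1,p.2,t) * px U₂ (p.1,p.2,t))) :=
    (cZ.comp emb).mul (((hU₁.continuous.comp emb).mul ((cont_px hU₁).comp emb)).sub
      ((hU₂.continuous.comp emb).mul ((cont_px hU₂).comp emb)))
  have c3 : Continuous (fun p : ℝ × ℝ => Z (p.1,p.2,t) * px (px (px Z)) (p.1,p.2,t)) :=
    (cZ.comp emb).mul ((cont_px hZ.px.px).comp emb)
  have c4 : Continuous (fun p : ℝ × ℝ => Z (p.1,p.2,t) * px (py (py Z)) (p.1,p.2,t)) :=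
    (cZ.comp emb).mul ((cont_px hZ.py.py).comp emb)
  have cW : Continuous (fun p : ℝ × ℝ => (Z (p.1,p.2,t))^2 *
      (px U₁ (p.1,p.2,t) + px U₂ (p.1,p.2,t))) :=
    ((cZ.comp emb).pow 2).mul (((cont_px hU₁).comp emb).add ((cont_px hU₂).comp emb))
  have csq : Continuous (fun p : ℝ × ℝ => (Z (p.1,p.2,t))^2) := (cZ.comp emb).pow 2
  -- boundary facts
  have e0 : ∀ y ∈ Icc (-B) B, Z (0,y,t) = 0 := fun y hy => by
    simp [hZdef, (hbx0 y hy).1, (hbx0 y hy).2]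
  have eL : ∀ y ∈ Icc (-B) B, Z (L,y,t) = 0 := fun y hy => by
    simp [hZdef, (hbxL y hy).1, (hbxL y hy).2]
  -- Term 1 : ∫∫ Z Zx = 0
  have hI1 : ∫ p in Ioo 0 L ×ˢ Ioo (-B) B, Z (p.1,p.2,t) * px Z (p.1,p.2,t) = 0 := by
    rw [rect_iter c1, rect_swap c1]
    calc ∫ y in Ioo (-B) B, ∫ x in Ioo 0 L,
          (fun p : ℝ × ℝ => Z (p.1,p.2,t) * px Z (p.1,p.2,t)) (x, y)
        = ∫ _y in Ioo (-B) B, (0:ℝ) := by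
          apply setIntegral_congr_fun measurableSet_Ioo
          intro y hy
          have hy' : y ∈ Icc (-B) B := Ioo_subset_Icc_self hy
          dsimp only
          rw [ioo_eq_intervalIntegral hL.le, ibp_A hZ, e0 y hy', eL y hy']
          ring
      _ = 0 := by simp
  -- Term 2 : ∫∫ Z N = (1/4) ∫∫ Z² Wx
  have hI2 : ∫ p in Ioo 0 L ×ˢ Ioo (-B) B, Z (p.1,p.2,t) *
        (U₁ (p.1,p.2,t) * px U₁ (p.1,p.2,t) - U₂ (p.1,p.2,t) * px U₂ (p.1,p.2,t))
      = (1/4) * ∫ p in Ioo 0 L ×ˢ Ioo (-B) B, (Z (p.1,p.2,t))^2 *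
          (px U₁ (p.1,p.2,t) + px U₂ (p.1,p.2,t)) := by
    rw [rect_iter c2, rect_swap c2, rect_iter cW, rect_swap cW,
      ← MeasureTheory.integral_const_mul]
    apply setIntegral_congr_fun measurableSet_Ioo
    intro y hy
    have hy' : y ∈ Icc (-B) B := Ioo_subset_Icc_self hy
    dsimp only
    rw [ioo_eq_intervalIntegral hL.le, ioo_eq_intervalIntegral hL.le]
    have h := ibp_B (L := L) (y := y) (t := t) hU₁ hU₂
      (hbx0 y hy').1 (hbxL y hy').1 (hbx0 y hy').2 (hbxL y hy').2
    simp only [hZdef]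
    exact h
  -- Term 3 : ∫∫ Z Zxxx = ∫ (Zx(0,y,t))²/2
  have hI3 : ∫ p in Ioo 0 L ×ˢ Ioo (-B) B, Z (p.1,p.2,t) * px (px (px Z)) (p.1,p.2,t)
      = ∫ y in Ioo (-B) B, (px Z (0,y,t))^2/2 := by
    rw [rect_iter c3, rect_swap c3]
    apply setIntegral_congr_fun measurableSet_Ioo
    intro y hy
    have hy' : y ∈ Icc (-B) B := Ioo_subset_Icc_self hy
    dsimp only
    rw [ioo_eq_intervalIntegral hL.le, ibp_C1 hZ, ibp_C2 hZ, e0 y hy', eL y hy',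
      hbxLx y hy']
    ring
  have hI3nonneg : 0 ≤ ∫ y in Ioo (-B) B, (px Z (0,y,t))^2/2 :=
    setIntegral_nonneg measurableSet_Ioo (fun y _ => by positivity)
  -- Term 4 : ∫∫ Z (Zyy)_x = 0
  have cmid : Continuous (fun p : ℝ × ℝ => px Z (p.1,p.2,t) * py (py Z) (p.1,p.2,t)) :=
    (cpx.comp emb).mul ((cont_py hZ.py).comp emb)
  have cfin : Continuous (fun p : ℝ × ℝ => px (py Z) (p.1,p.2,t) * py Z (p.1,p.2,t)) :=
    ((cont_px hZ.py).comp emb).mul ((cont_py hZ).comp emb)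
  have hI4 : ∫ p in Ioo 0 L ×ˢ Ioo (-B) B, Z (p.1,p.2,t) * px (py (py Z)) (p.1,p.2,t) = 0 := by
    have step1 : ∫ p in Ioo 0 L ×ˢ Ioo (-B) B, Z (p.1,p.2,t) * px (py (py Z)) (p.1,p.2,t)
        = - ∫ y in Ioo (-B) B, ∫ x in Ioo 0 L,
            (fun p : ℝ × ℝ => px Z (p.1,p.2,t) * py (py Z) (p.1,p.2,t)) (x, y) := by
      rw [rect_iter c4, rect_swap c4, ← MeasureTheory.integral_neg]
      apply setIntegral_congr_fun measurableSet_Ioo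
      intro y hy
      have hy' : y ∈ Icc (-B) B := Ioo_subset_Icc_self hy
      dsimp only
      rw [ioo_eq_intervalIntegral hL.le, ibp_D1 hZ, ioo_eq_intervalIntegral hL.le,
        e0 y hy', eL y hy']
      ring
    have step2 : ∫ y in Ioo (-B) B, ∫ x in Ioo 0 L,
          (fun p : ℝ × ℝ => px Z (p.1,p.2,t) * py (py Z) (p.1,p.2,t)) (x, y)
        = - ∫ y in Ioo (-B) B, ∫ x in Ioo 0 L,
            (fun p : ℝ × ℝ => px (py Z) (p.1,p.2,t) * py Z (p.1,p.2,t)) (x, y) := by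
      rw [← rect_swap cmid, ← rect_swap cfin, ← MeasureTheory.integral_neg]
      apply setIntegral_congr_fun measurableSet_Ioo
      intro x hx
      have hx' : x ∈ Icc 0 L := Ioo_subset_Icc_self hx
      dsimp only
      rw [ioo_eq_intervalIntegral hBB, ibp_D2 hZ, ioo_eq_intervalIntegral hBB]
      have hb1 : px Z (x, B, t) = 0 := by
        rw [← deriv_slice_x hZ x B t]
        exact deriv_eq_zero_of_eqOn_zero hx
          (fun x' hx'' => (hbyB x' (Ioo_subset_Icc_self hx'')).1)
      have hb2 : px Z (x, -B, t) = 0 := by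
        rw [← deriv_slice_x hZ x (-B) t]
        exact deriv_eq_zero_of_eqOn_zero hx
          (fun x' hx'' => (hbyB x' (Ioo_subset_Icc_self hx'')).2)
      rw [hb1, hb2]
      ring
    have step3 : ∫ y in Ioo (-B) B, ∫ x in Ioo 0 L,
          (fun p : ℝ × ℝ => px (py Z) (p.1,p.2,t) * py Z (p.1,p.2,t)) (x, y) = 0 := by
      calc ∫ y in Ioo (-B) B, ∫ x in Ioo 0 L,
            (fun p : ℝ × ℝ => px (py Z) (p.1,p.2,t) * py Z (p.1,p.2,t)) (x, y)
          = ∫ _y in Ioo (-B) B, (0:ℝ) := by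
            apply setIntegral_congr_fun measurableSet_Ioo
            intro y hy
            dsimp only
            rw [ioo_eq_intervalIntegral hL.le, ibp_D3 hZ]
            have hb0 : py Z (0, y, t) = 0 := by
              rw [← deriv_slice_y hZ 0 y t]
              exact deriv_eq_zero_of_eqOn_zero hy
                (fun y' hy'' => e0 y' (Ioo_subset_Icc_self hy''))
            have hbL : py Z (L, y, t) = 0 := by
              rw [← deriv_slice_y hZ L y t]
              exact deriv_eq_zero_of_eqOn_zero hy
                (fun y' hy'' => eL y' (Ioo_subset_Icc_self hy''))
            rw [hb0, hbL]
            ring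
        _ = 0 := by simp
    rw [step1, step2, step3]
    ring
  -- pointwise identity and splitting
  have hsplit : ∫ p in Ioo 0 L ×ˢ Ioo (-B) B, pt (fun q => (Z q)^2) (p.1,p.2,t)
      = (-2) * ((∫ p in Ioo 0 L ×ˢ Ioo (-B) B, Z (p.1,p.2,t) * px Z (p.1,p.2,t))
        + ((∫ p in Ioo 0 L ×ˢ Ioo (-B) B, Z (p.1,p.2,t) *
            (U₁ (p.1,p.2,t) * px U₁ (p.1,p.2,t) - U₂ (p.1,p.2,t) * px U₂ (p.1,p.2,t)))
        + ((∫ p in Ioo 0 L ×ˢ Ioo (-B) B, Z (p.1,p.2,t) * px (px (px Z)) (p.1,p.2,t))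
        + (∫ p in Ioo 0 L ×ˢ Ioo (-B) B, Z (p.1,p.2,t) * px (py (py Z)) (p.1,p.2,t))))) := by
    have i1 := integrableOn_rect c1 0 L (-B) B
    have i2 := integrableOn_rect c2 0 L (-B) B
    have i3 := integrableOn_rect c3 0 L (-B) B
    have i4 := integrableOn_rect c4 0 L (-B) B
    calc ∫ p in Ioo 0 L ×ˢ Ioo (-B) B, pt (fun q => (Z q)^2) (p.1,p.2,t)
        = ∫ p in Ioo 0 L ×ˢ Ioo (-B) B, (-2 : ℝ) * (Z (p.1,p.2,t) * px Z (p.1,p.2,t)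
          + (Z (p.1,p.2,t) * (U₁ (p.1,p.2,t) * px U₁ (p.1,p.2,t)
              - U₂ (p.1,p.2,t) * px U₂ (p.1,p.2,t))
          + (Z (p.1,p.2,t) * px (px (px Z)) (p.1,p.2,t)
          + Z (p.1,p.2,t) * px (py (py Z)) (p.1,p.2,t)))) := by
          apply setIntegral_congr_fun cS
          rintro ⟨x, y⟩ hp
          dsimp only
          rw [pt_sq hZ, hpt x hp.1 y hp.2]
          ring
      _ = (-2 : ℝ) * ∫ p in Ioo 0 L ×ˢ Ioo (-B) B, (Z (p.1,p.2,t) * px Z (p.1,p.2,t)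
          + (Z (p.1,p.2,t) * (U₁ (p.1,p.2,t) * px U₁ (p.1,p.2,t)
              - U₂ (p.1,p.2,t) * px U₂ (p.1,p.2,t))
          + (Z (p.1,p.2,t) * px (px (px Z)) (p.1,p.2,t)
          + Z (p.1,p.2,t) * px (py (py Z)) (p.1,p.2,t)))) :=
          MeasureTheory.integral_const_mul _ _
      _ = _ := by
          rw [MeasureTheory.integral_add i1 (integrableOn_rect (c2.fun_add (c3.fun_add c4)) 0 L (-B) B),
            MeasureTheory.integral_add i2 (integrableOn_rect (c3.fun_add c4) 0 L (-B) B),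
            MeasureTheory.integral_add i3 i4]
  -- final estimate
  have hbound : -(1/2) * (∫ p in Ioo 0 L ×ˢ Ioo (-B) B, (Z (p.1,p.2,t))^2 *
        (px U₁ (p.1,p.2,t) + px U₂ (p.1,p.2,t)))
      ≤ (M/2) * ∫ p in Ioo 0 L ×ˢ Ioo (-B) B, (Z (p.1,p.2,t))^2 := by
    rw [← MeasureTheory.integral_const_mul, ← MeasureTheory.integral_const_mul]
    apply setIntegral_mono_on
    · exact (integrableOn_rect cW _ _ _ _).const_mul _
    · exact (integrableOn_rect csq _ _ _ _).const_mul _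
    · exact cS
    · rintro ⟨x, y⟩ hp
      have hb := hMb x (Ioo_subset_Icc_self hp.1) y (Ioo_subset_Icc_self hp.2)
      have h1 := (abs_le.1 hb).1
      have h2 := (abs_le.1 hb).2
      dsimp only
      nlinarith [sq_nonneg (Z (x,y,t))]
  rw [hsplit, hI1, hI2, hI3, hI4]
  have := hI3nonneg
  linarith

set_option maxHeartbeats 4000000 in
/-- Uniqueness (Section 4, part of Theorem 1): two smooth solutions of the
Zakharov–Kuznetsov equation `u_t + (1+u)u_x + u_{xxx} + u_{xyy} = 0` on
`D × (0,T)`, `D = (0,L) × (-B,B)`, satisfying the boundary conditions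
(2.2)-(2.3) and the same initial data, coincide on `D × [0,T]`. -/
theorem ZK_uniqueness (L B T : ℝ) (hL : 0 < L) (hB : 0 < B) (hT : 0 < T)
    (u₁ u₂ : ℝ → ℝ → ℝ → ℝ)
    (hu₁ : ContDiff ℝ (⊤ : ℕ∞) (fun p : ℝ × ℝ × ℝ => u₁ p.1 p.2.1 p.2.2))
    (hu₂ : ContDiff ℝ (⊤ : ℕ∞) (fun p : ℝ × ℝ × ℝ => u₂ p.1 p.2.1 p.2.2))
    (hpde₁ : ∀ x ∈ Ioo 0 L, ∀ y ∈ Ioo (-B) B, ∀ t ∈ Ioo 0 T,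
      deriv (fun t' => u₁ x y t') t
        + (1 + u₁ x y t) * deriv (fun x' => u₁ x' y t) x
        + deriv^[3] (fun x' => u₁ x' y t) x
        + deriv (fun x' => deriv^[2] (fun y' => u₁ x' y' t) y) x = 0)
    (hpde₂ : ∀ x ∈ Ioo 0 L, ∀ y ∈ Ioo (-B) B, ∀ t ∈ Ioo 0 T,
      deriv (fun t' => u₂ x y t') t
        + (1 + u₂ x y t) * deriv (fun x' => u₂ x' y t) x
        + deriv^[3] (fun x' => u₂ x' y t) x
        + deriv (fun x' => deriv^[2] (fun y' => u₂ x' y' t) y) x = 0)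
    (hby₁ : ∀ x ∈ Icc 0 L, ∀ t ∈ Icc 0 T, u₁ x (-B) t = 0 ∧ u₁ x B t = 0)
    (hby₂ : ∀ x ∈ Icc 0 L, ∀ t ∈ Icc 0 T, u₂ x (-B) t = 0 ∧ u₂ x B t = 0)
    (hbx₁ : ∀ y ∈ Icc (-B) B, ∀ t ∈ Icc 0 T,
      u₁ 0 y t = 0 ∧ u₁ L y t = 0 ∧ deriv (fun x' => u₁ x' y t) L = 0)
    (hbx₂ : ∀ y ∈ Icc (-B) B, ∀ t ∈ Icc 0 T,
      u₂ 0 y t = 0 ∧ u₂ L y t = 0 ∧ deriv (fun x' => u₂ x' y t) L = 0)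
    (hinit : ∀ x ∈ Ioo 0 L, ∀ y ∈ Ioo (-B) B, u₁ x y 0 = u₂ x y 0) :
    ∀ x ∈ Ioo 0 L, ∀ y ∈ Ioo (-B) B, ∀ t ∈ Icc 0 T, u₁ x y t = u₂ x y t := by
  classical
  set U₁f : ℝ × ℝ × ℝ → ℝ := fun p => u₁ p.1 p.2.1 p.2.2 with hU₁def
  set U₂f : ℝ × ℝ × ℝ → ℝ := fun p => u₂ p.1 p.2.1 p.2.2 with hU₂def
  have hU₁ : ContDiff ℝ (⊤ : ℕ∞) U₁f := hu₁
  have hU₂ : ContDiff ℝ (⊤ : ℕ∞) U₂f := hu₂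
  set Zf : ℝ × ℝ × ℝ → ℝ := fun p => U₁f p - U₂f p with hZdef
  have hZ : ContDiff ℝ (⊤ : ℕ∞) Zf := hU₁.sub hU₂
  have cS : MeasurableSet (Ioo (0:ℝ) L ×ˢ Ioo (-B) B) := measurableSet_Ioo.prod measurableSet_Ioo
  -- PDEs in partial derivative form
  have pde₁' : ∀ x ∈ Ioo 0 L, ∀ y ∈ Ioo (-B) B, ∀ t ∈ Ioo 0 T,
      pt U₁f (x,y,t) + (1 + U₁f (x,y,t)) * px U₁f (x,y,t)
        + px (px (px U₁f)) (x,y,t) + px (py (py U₁f)) (x,y,t) = 0 := by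
    intro x hx y hy t ht
    have h := hpde₁ x hx y hy t ht
    have e1 : deriv (fun t' => u₁ x y t') t = pt U₁f (x,y,t) := deriv_slice_t hU₁ x y t
    have e2 : deriv (fun x' => u₁ x' y t) x = px U₁f (x,y,t) := deriv_slice_x hU₁ x y t
    have e3 : deriv^[3] (fun x' => u₁ x' y t) x = px (px (px U₁f)) (x,y,t) :=
      deriv3_slice_x hU₁ x y t
    have e4 : deriv (fun x' => deriv^[2] (fun y' => u₁ x' y' t) y) x
        = px (py (py U₁f)) (x,y,t) := by
      have h4 : (fun x' => deriv^[2] (fun y' => u₁ x' y' t) y)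
          = (fun x' => py (py U₁f) (x', y, t)) := funext fun x' => deriv2_slice_y hU₁ x' y t
      rw [h4]
      exact deriv_slice_x hU₁.py.py x y t
    rw [e1, e2, e3, e4] at h
    exact h
  have pde₂' : ∀ x ∈ Ioo 0 L, ∀ y ∈ Ioo (-B) B, ∀ t ∈ Ioo 0 T,
      pt U₂f (x,y,t) + (1 + U₂f (x,y,t)) * px U₂f (x,y,t)
        + px (px (px U₂f)) (x,y,t) + px (py (py U₂f)) (x,y,t) = 0 := by
    intro x hx y hy t ht
    have h := hpde₂ x hx y hy t ht
    have e1 : deriv (fun t' => u₂ x y t') t = pt U₂f (x,y,t) := deriv_slice_t hU₂ x y t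
    have e2 : deriv (fun x' => u₂ x' y t) x = px U₂f (x,y,t) := deriv_slice_x hU₂ x y t
    have e3 : deriv^[3] (fun x' => u₂ x' y t) x = px (px (px U₂f)) (x,y,t) :=
      deriv3_slice_x hU₂ x y t
    have e4 : deriv (fun x' => deriv^[2] (fun y' => u₂ x' y' t) y) x
        = px (py (py U₂f)) (x,y,t) := by
      have h4 : (fun x' => deriv^[2] (fun y' => u₂ x' y' t) y)
          = (fun x' => py (py U₂f) (x', y, t)) := funext fun x' => deriv2_slice_y hU₂ x' y t
      rw [h4]
      exact deriv_slice_x hU₂.py.py x y t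
    rw [e1, e2, e3, e4] at h
    exact h
  -- derivative identity for the difference
  have hpt : ∀ t ∈ Ioo 0 T, ∀ x ∈ Ioo 0 L, ∀ y ∈ Ioo (-B) B,
      pt Zf (x,y,t) = -(px Zf (x,y,t)
        + (U₁f (x,y,t) * px U₁f (x,y,t) - U₂f (x,y,t) * px U₂f (x,y,t))
        + px (px (px Zf)) (x,y,t) + px (py (py Zf)) (x,y,t)) := by
    intro t ht x hx y hy
    have h1 := pde₁' x hx y hy t ht
    have h2 := pde₂' x hx y hy t ht
    have dt : pt Zf (x,y,t) = pt U₁f (x,y,t) - pt U₂f (x,y,t) := by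
      rw [hZdef, pt_subf hU₁ hU₂]
    have dx : px Zf (x,y,t) = px U₁f (x,y,t) - px U₂f (x,y,t) := by
      rw [hZdef, px_subf hU₁ hU₂]
    have dxxx : px (px (px Zf)) (x,y,t)
        = px (px (px U₁f)) (x,y,t) - px (px (px U₂f)) (x,y,t) := by
      rw [hZdef, px_subf hU₁ hU₂, px_subf hU₁.px hU₂.px, px_subf hU₁.px.px hU₂.px.px]
    have dxyy : px (py (py Zf)) (x,y,t)
        = px (py (py U₁f)) (x,y,t) - px (py (py U₂f)) (x,y,t) := by
      rw [hZdef, py_subf hU₁ hU₂, py_subf hU₁.py hU₂.py, px_subf hU₁.py.py hU₂.py.py]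
    rw [dt, dx, dxxx, dxyy]
    linear_combination h1 - h2
  -- bound on px U₁f + px U₂f
  have hWc : Continuous (fun q : ℝ × ℝ × ℝ => px U₁f q + px U₂f q) :=
    (cont_px hU₁).add (cont_px hU₂)
  have hK : IsCompact (Icc (0:ℝ) L ×ˢ Icc (-B) B ×ˢ Icc 0 T : Set (ℝ × ℝ × ℝ)) :=
    isCompact_Icc.prod (isCompact_Icc.prod isCompact_Icc)
  obtain ⟨M, hM⟩ := hK.exists_bound_of_continuousOn hWc.continuousOn
  -- the energy and its derivative
  have hE : ∀ t₀ : ℝ, HasDerivAt (fun t => ∫ p in Ioo 0 L ×ˢ Ioo (-B) B, (Zf (p.1,p.2,t))^2)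
      (∫ p in Ioo 0 L ×ˢ Ioo (-B) B, pt (fun q => (Zf q)^2) (p.1,p.2,t₀)) t₀ :=
    fun t₀ => by
      have h := hasDerivAt_param_integral (G := fun q => (Zf q)^2) (hZ.pow 2) 0 L (-B) B t₀
      simpa using h
  have hE0 : (∫ p in Ioo 0 L ×ˢ Ioo (-B) B, (Zf (p.1,p.2,0))^2) = 0 := by
    have heq : (∫ p in Ioo 0 L ×ˢ Ioo (-B) B, (Zf (p.1,p.2,0))^2)
        = ∫ _p in Ioo (0:ℝ) L ×ˢ Ioo (-B) B, (0:ℝ) := by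
      apply setIntegral_congr_fun cS
      rintro ⟨x, y⟩ hp
      have hz : Zf (x,y,0) = 0 := by
        have h := hinit x hp.1 y hp.2
        simp only [hZdef, hU₁def, hU₂def]
        simp [h]
      dsimp only
      rw [hz]
      ring
    simpa using heq
  -- one-sided derivative bound on [0, T)
  have hD : ∀ t ∈ Ico 0 T,
      (∫ p in Ioo 0 L ×ˢ Ioo (-B) B, pt (fun q => (Zf q)^2) (p.1,p.2,t))
        ≤ (M/2) * ∫ p in Ioo 0 L ×ˢ Ioo (-B) B, (Zf (p.1,p.2,t))^2 := by
    intro t ht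
    rcases eq_or_lt_of_le ht.1 with h0 | hpos
    · -- t = 0
      subst h0
      rw [hE0, mul_zero]
      apply le_of_eq
      have heq : (∫ p in Ioo 0 L ×ˢ Ioo (-B) B, pt (fun q => (Zf q)^2) (p.1,p.2,0))
          = ∫ _p in Ioo (0:ℝ) L ×ˢ Ioo (-B) B, (0:ℝ) := by
        apply setIntegral_congr_fun cS
        rintro ⟨x, y⟩ hp
        have hz : Zf (x,y,0) = 0 := by
          have h := hinit x hp.1 y hp.2
          simp only [hZdef, hU₁def, hU₂def]
          simp [h]
        dsimp only
        rw [pt_sq hZ, hz]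
        ring
      simpa using heq
    · -- 0 < t < T
      have ht' : t ∈ Ioo 0 T := ⟨hpos, ht.2⟩
      have htIcc : t ∈ Icc 0 T := ⟨ht.1, ht.2.le⟩
      apply main_estimate hL hB hU₁ hU₂ hZdef (hpt t ht')
      · intro y hy
        exact ⟨(hbx₁ y hy t htIcc).1, (hbx₂ y hy t htIcc).1⟩
      · intro y hy
        exact ⟨(hbx₁ y hy t htIcc).2.1, (hbx₂ y hy t htIcc).2.1⟩
      · intro y hy
        have d1 : px U₁f (L,y,t) = 0 := by
          rw [← deriv_slice_x hU₁ L y t]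
          exact (hbx₁ y hy t htIcc).2.2
        have d2 : px U₂f (L,y,t) = 0 := by
          rw [← deriv_slice_x hU₂ L y t]
          exact (hbx₂ y hy t htIcc).2.2
        rw [hZdef, px_subf hU₁ hU₂]
        dsimp only
        rw [d1, d2]
        ring
      · intro x hx
        constructor
        · have h1 := (hby₁ x hx t htIcc).2
          have h2 := (hby₂ x hx t htIcc).2
          simp only [hZdef, hU₁def, hU₂def]
          simp [h1, h2]
        · have h1 := (hby₁ x hx t htIcc).1
          have h2 := (hby₂ x hx t htIcc).1
          simp only [hZdef, hU₁def, hU₂def]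
          simp [h1, h2]
      · intro x hx y hy
        have := hM ((x, y, t)) ⟨hx, hy, htIcc⟩
        simpa [Real.norm_eq_abs] using this
  -- Gronwall
  have hEcont : ContinuousOn (fun t => ∫ p in Ioo 0 L ×ˢ Ioo (-B) B, (Zf (p.1,p.2,t))^2)
      (Icc 0 T) := fun t _ => (hE t).continuousAt.continuousWithinAt
  have hgron := le_gronwallBound_of_liminf_deriv_right_le (f := fun t =>
      ∫ p in Ioo 0 L ×ˢ Ioo (-B) B, (Zf (p.1,p.2,t))^2)
    (f' := fun t => ∫ p in Ioo 0 L ×ˢ Ioo (-B) B, pt (fun q => (Zf q)^2) (p.1,p.2,t))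
    (δ := 0) (K := M/2) (ε := 0) (a := 0) (b := T) hEcont
    (by
      intro x hx r hr
      have hd := (hE x).hasDerivWithinAt (s := Ioi x)
      have hslope := (hasDerivWithinAt_iff_tendsto_slope' (notMem_Ioi.2 le_rfl)).1 hd
      have hev := (tendsto_order.1 hslope).2 r hr
      apply hev.frequently.mono
      intro z hz
      rwa [slope_def_field, div_eq_inv_mul] at hz)
    (le_of_eq hE0)
    (by
      intro x hx
      rw [add_zero]
      exact hD x hx)
  have hEzero : ∀ t ∈ Icc 0 T,
      (∫ p in Ioo 0 L ×ˢ Ioo (-B) B, (Zf (p.1,p.2,t))^2) = 0 := by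
    intro t ht
    have hle := hgron t ht
    rw [gronwallBound_ε0] at hle
    have hge : 0 ≤ ∫ p in Ioo 0 L ×ˢ Ioo (-B) B, (Zf (p.1,p.2,t))^2 :=
      setIntegral_nonneg cS (fun p _ => sq_nonneg _)
    simp only [zero_mul] at hle
    linarith
  -- extraction
  intro x hx y hy t ht
  by_contra hne
  have hzne : Zf (x,y,t) ≠ 0 := by
    simp only [hZdef, hU₁def, hU₂def]
    simpa [sub_eq_zero] using hne
  have emb : Continuous (fun p : ℝ × ℝ => ((p.1, p.2, t) : ℝ × ℝ × ℝ)) := by fun_prop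
  have cg : Continuous (fun p : ℝ × ℝ => (Zf (p.1,p.2,t))^2) := (hZ.continuous.comp emb).pow 2
  have hgpos : 0 < (Zf (((x,y) : ℝ × ℝ).1, ((x,y) : ℝ × ℝ).2, t))^2 := by
    dsimp only
    positivity
  have hopen : IsOpen ({p : ℝ × ℝ | 0 < (Zf (p.1,p.2,t))^2} ∩ (Ioo 0 L ×ˢ Ioo (-B) B)) :=
    (isOpen_lt continuous_const cg).inter ((isOpen_Ioo).prod isOpen_Ioo)
  have hne' : ({p : ℝ × ℝ | 0 < (Zf (p.1,p.2,t))^2} ∩ (Ioo 0 L ×ˢ Ioo (-B) B)).Nonempty :=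
    ⟨(x, y), hgpos, hx, hy⟩
  have hsub : ({p : ℝ × ℝ | 0 < (Zf (p.1,p.2,t))^2} ∩ (Ioo 0 L ×ˢ Ioo (-B) B))
      ⊆ Function.support (fun p : ℝ × ℝ => (Zf (p.1,p.2,t))^2) ∩ (Ioo 0 L ×ˢ Ioo (-B) B) :=
    fun p hp => ⟨ne_of_gt hp.1, hp.2⟩
  have hpos : 0 < ∫ p in Ioo 0 L ×ˢ Ioo (-B) B, (Zf (p.1,p.2,t))^2 := by
    rw [setIntegral_pos_iff_support_of_nonneg_ae
      (Filter.Eventually.of_forall (fun p => sq_nonneg _))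
      (integrableOn_rect cg 0 L (-B) B)]
    exact lt_of_lt_of_le (hopen.measure_pos volume hne') (measure_mono hsub)
  rw [hEzero t ht] at hpos
  exact lt_irrefl 0 hpos
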